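/- arXiv:1710.06526 — 3 statements merged into one kernel-verified Lean document; each statement's English description precedes it below -/
import Mathlib

section
/- The function t ↦ (1 - β + β t^{1/θ})^θ on (0,∞) is concave when θ ≥ 1 or θ < 0, and convex when 0 < θ ≤ 1, where β ∈ (0,1). -/
/-!
Write `φ t = (c + b t^(1/θ))^θ` with `b > 0`, `c ≥ 0`. Because `(1/θ) θ = 1`, the chain rule gives
`φ' t = b (c t^(-1/θ) + b)^(θ - 1)`. The base `c t^(-1/θ) + b` is positive, decreasing in `t` when
`θ > 0` and increasing when `θ < 0`; the power `θ - 1` keeps that direction when `θ ≥ 1` and reverses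
it when `θ < 1`. Hence `φ'` is antitone when `θ ≥ 1` or `θ < 0`, and monotone when `0 < θ ≤ 1`.
-/

open Real Set

theorem MonotoneOn.convexOn_of_hasDerivAt {D : Set ℝ} (hD : Convex ℝ D) (hDo : IsOpen D)
    {f f' : ℝ → ℝ} (hf : ∀ x ∈ D, HasDerivAt f (f' x) x) (hf' : MonotoneOn f' D) :
    ConvexOn ℝ D f := by
  have hdiff : DifferentiableOn ℝ f D := fun x hx =>
    (hf x hx).differentiableAt.differentiableWithinAt
  refine MonotoneOn.convexOn_of_deriv hD hdiff.continuousOn (by rwa [hDo.interior_eq]) ?_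
  rw [hDo.interior_eq]
  exact hf'.congr fun x hx => (hf x hx).deriv.symm

theorem AntitoneOn.concaveOn_of_hasDerivAt {D : Set ℝ} (hD : Convex ℝ D) (hDo : IsOpen D)
    {f f' : ℝ → ℝ} (hf : ∀ x ∈ D, HasDerivAt f (f' x) x) (hf' : AntitoneOn f' D) :
    ConcaveOn ℝ D f := by
  have hdiff : DifferentiableOn ℝ f D := fun x hx =>
    (hf x hx).differentiableAt.differentiableWithinAt
  refine AntitoneOn.concaveOn_of_deriv hD hdiff.continuousOn (by rwa [hDo.interior_eq]) ?_
  rw [hDo.interior_eq]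
  exact hf'.congr fun x hx => (hf x hx).deriv.symm

section

variable {b c θ : ℝ}

theorem hasDerivAt_add_mul_rpow_one_div_rpow (hc : 0 ≤ c) (hb : 0 < b) (hθ : θ ≠ 0) {t : ℝ}
    (ht : 0 < t) :
    HasDerivAt (fun t => (c + b * t ^ (1 / θ)) ^ θ) (b * (c * t ^ (-(1 / θ)) + b) ^ (θ - 1)) t := by
  set a := 1 / θ
  have hu : 0 < c + b * t ^ a := by positivity
  have haθ : a * θ = 1 := one_div_mul_cancel hθ
  have hbase : HasDerivAt (fun t => c + b * t ^ a) (b * (a * t ^ (a - 1))) t :=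
    ((hasDerivAt_rpow_const (Or.inl ht.ne')).const_mul b).const_add c
  convert hbase.rpow_const (p := θ) (Or.inl hu.ne') using 1
  have hpow : t ^ (a - 1) = (t ^ (-a)) ^ (θ - 1) := by
    rw [← rpow_mul ht.le]
    congr 1
    linear_combination haθ
  have hsplit : t ^ (-a) * (c + b * t ^ a) = c * t ^ (-a) + b := by
    have : t ^ (-a) * t ^ a = 1 := by rw [← rpow_add ht, neg_add_cancel, rpow_zero]
    linear_combination b * this
  calc b * (c * t ^ (-a) + b) ^ (θ - 1)
      = b * (a * θ) * ((t ^ (-a)) ^ (θ - 1) * (c + b * t ^ a) ^ (θ - 1)) := by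
        rw [haθ, mul_one, ← mul_rpow (rpow_nonneg ht.le _) hu.le, hsplit]
    _ = b * (a * t ^ (a - 1)) * θ * (c + b * t ^ a) ^ (θ - 1) := by rw [hpow]; ring

theorem antitoneOn_mul_rpow_neg_one_div_add (hc : 0 ≤ c) (hθ : 0 < θ) :
    AntitoneOn (fun t => c * t ^ (-(1 / θ)) + b) (Ioi 0) := fun _ hx _ _ hxy => by
  have : 0 < 1 / θ := by positivity
  dsimp only
  gcongr c * ?_ + b
  exact rpow_le_rpow_of_nonpos hx hxy (by linarith)

theorem monotoneOn_mul_rpow_neg_one_div_add (hc : 0 ≤ c) (hθ : θ < 0) :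
    MonotoneOn (fun t => c * t ^ (-(1 / θ)) + b) (Ioi 0) := fun _ hx _ _ hxy => by
  have : 1 / θ < 0 := one_div_neg.mpr hθ
  dsimp only
  gcongr c * ?_ + b
  exact rpow_le_rpow (le_of_lt hx) hxy (by linarith)

theorem concaveOn_add_mul_rpow_one_div_rpow (hc : 0 ≤ c) (hb : 0 < b) (hθ : 1 ≤ θ ∨ θ < 0) :
    ConcaveOn ℝ (Ioi 0) (fun t => (c + b * t ^ (1 / θ)) ^ θ) := by
  have hθ0 : θ ≠ 0 := by rintro rfl; norm_num at hθ
  refine AntitoneOn.concaveOn_of_hasDerivAt (convex_Ioi 0) isOpen_Ioi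
    (fun t ht => hasDerivAt_add_mul_rpow_one_div_rpow hc hb hθ0 ht) fun x hx y hy hxy => ?_
  have hxpos : 0 < c * x ^ (-(1 / θ)) + b := by have := hx.out; positivity
  have hypos : 0 < c * y ^ (-(1 / θ)) + b := by have := hy.out; positivity
  gcongr b * ?_
  rcases hθ with hθ | hθ
  · exact rpow_le_rpow hypos.le
      (antitoneOn_mul_rpow_neg_one_div_add hc (by linarith) hx hy hxy) (by linarith)
  · exact rpow_le_rpow_of_nonpos hxpos
      (monotoneOn_mul_rpow_neg_one_div_add hc hθ hx hy hxy) (by linarith)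

theorem convexOn_add_mul_rpow_one_div_rpow (hc : 0 ≤ c) (hb : 0 < b) (hθ₀ : 0 < θ)
    (hθ₁ : θ ≤ 1) : ConvexOn ℝ (Ioi 0) (fun t => (c + b * t ^ (1 / θ)) ^ θ) := by
  refine MonotoneOn.convexOn_of_hasDerivAt (convex_Ioi 0) isOpen_Ioi
    (fun t ht => hasDerivAt_add_mul_rpow_one_div_rpow hc hb hθ₀.ne' ht) fun x hx y hy hxy => ?_
  have hypos : 0 < c * y ^ (-(1 / θ)) + b := by have := hy.out; positivity
  gcongr b * ?_
  exact rpow_le_rpow_of_nonpos hypos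
    (antitoneOn_mul_rpow_neg_one_div_add hc hθ₀ hx hy hxy) (by linarith)

end

theorem stmt_6_general (β θ : ℝ) (hβ0 : 0 < β) (hβ1 : β < 1) :
    ((1 ≤ θ ∨ θ < 0) →
      ConcaveOn ℝ (Set.Ioi (0 : ℝ)) (fun t => (1 - β + β * t ^ (1 / θ)) ^ θ)) ∧
    (0 < θ → θ ≤ 1 →
      ConvexOn ℝ (Set.Ioi (0 : ℝ)) (fun t => (1 - β + β * t ^ (1 / θ)) ^ θ)) := by
  have hc : 0 ≤ 1 - β := by linarith
  exact ⟨concaveOn_add_mul_rpow_one_div_rpow hc hβ0,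
    convexOn_add_mul_rpow_one_div_rpow hc hβ0⟩

/-- `φ(t) = (1 - β + β t^{1/θ})^θ` on `(0,∞)` is concave when `θ ≥ 1` or `θ < 0`,
and convex when `0 < θ ≤ 1`, for `β ∈ (0,1)`. -/
theorem stmt_6 (β θ : ℝ) (hβ0 : 0 < β) (hβ1 : β < 1) (hθ : θ ≠ 0) :
    ((1 ≤ θ ∨ θ < 0) →
      ConcaveOn ℝ (Set.Ioi (0 : ℝ)) (fun t => (1 - β + β * t ^ (1 / θ)) ^ θ)) ∧
    (0 < θ → θ ≤ 1 →
      ConvexOn ℝ (Set.Ioi (0 : ℝ)) (fun t => (1 - β + β * t ^ (1 / θ)) ^ θ)) :=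
  stmt_6_general β θ hβ0 hβ1
end

section
/- In the Bansal–Yaron model with ln(C_{t+1}/C_t) = μ_c + X_t + σ_c ε_{t+1} and X_{t+1} = ρX_t + ση_{t+1} (stationary Gaussian AR(1) start, iid standard normal shocks), the risk-adjusted long-run mean consumption growth rate M := lim_{n→∞} (E[(C_n/C_0)^{1-γ}])^{1/((1-γ)n)} exists and equals exp{ μ_c + (1/2)(1-γ)(σ_c² + σ²/(1-ρ)²) }, for γ ≠ 1. -/
open MeasureTheory ProbabilityTheory Filter

open Real Finset Topology
open scoped NNReal

/-!
Along each path,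
`log (C n / C 0) = n μc + A n X₀ + σ ∑_{j<n} A (n-1-j) η_{j+1} + σc ∑_{t<n} ε_{t+1}`
with `A k = 1 + ρ + ⋯ + ρ^(k-1)`: a linear combination of independent centred Gaussians.
Hence `E[(C n / C 0)^θ] = exp (θ n μc + θ²/2 (Var(X₀ + ⋯ + X_{n-1}) + n σc²))`
exactly, and since `A k → 1/(1-ρ)`, a Cesàro argument gives
`Var(X₀ + ⋯ + X_{n-1}) / n → σ²/(1-ρ)²`; taking the `θ n`-th root with `θ = 1 - γ` yields the limit.
-/

theorem mgf_sum_mul_of_iIndepFun_gaussianReal {Ω ι : Type*} [MeasurableSpace Ω] {μ : Measure Ω}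
    {F : ι → Ω → ℝ} (hF : iIndepFun F μ) {m : ι → ℝ} {v : ι → ℝ≥0}
    (hlaw : ∀ k, μ.map (F k) = gaussianReal (m k) (v k)) (c : ι → ℝ) (s : Finset ι) (t : ℝ) :
    mgf (fun ω ↦ ∑ k ∈ s, c k * F k ω) μ t
      = exp (t * ∑ k ∈ s, c k * m k + t ^ 2 / 2 * ∑ k ∈ s, v k * c k ^ 2) := by
  have hmeas (k : ι) : AEMeasurable (F k) μ :=
    aemeasurable_of_map_neZero (by rw [hlaw k]; infer_instance)
  have hindep : iIndepFun (fun k ω ↦ c k * F k ω) μ :=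
    hF.comp (fun k x ↦ c k * x) fun k ↦ measurable_const_mul (c k)
  have hsum := hindep.mgf_sum₀ (t := t) (fun k ↦ (hmeas k).const_mul (c k)) s
  rw [show (fun ω ↦ ∑ k ∈ s, c k * F k ω) = ∑ k ∈ s, fun ω ↦ c k * F k ω by ext; simp, hsum,
    mul_sum, mul_sum, ← sum_add_distrib, exp_sum]
  refine prod_congr rfl fun k _ ↦ ?_
  rw [mgf_const_mul, mgf_gaussianReal (hlaw k)]
  congr 1
  ring

theorem sum_range_eq_of_succ_eq_mul_add {R : Type*} [CommSemiring R] {x u : ℕ → R} {ρ : R}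
    (h : ∀ t, x (t + 1) = ρ * x t + u t) (n : ℕ) :
    ∑ t ∈ range n, x t
      = (∑ i ∈ range n, ρ ^ i) * x 0 + ∑ j ∈ range n, (∑ i ∈ range (n - 1 - j), ρ ^ i) * u j := by
  induction n with
  | zero => simp
  | succ n ih =>
    have hcoef : ∀ j ∈ range n,
        (∑ i ∈ range (n - j), ρ ^ i) * u j
          = ρ * ((∑ i ∈ range (n - 1 - j), ρ ^ i) * u j) + u j := by
      intro j hj
      rw [show n - j = n - 1 - j + 1 by have := mem_range.1 hj; omega, geom_sum_succ]
      ring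
    rw [sum_range_succ' x, sum_range_succ (fun j ↦ (∑ i ∈ range (n + 1 - 1 - j), ρ ^ i) * u j)]
    simp only [h, Nat.add_sub_cancel, Nat.sub_self, range_zero, sum_empty, zero_mul, add_zero]
    rw [sum_congr rfl hcoef, sum_add_distrib, sum_add_distrib, ← mul_sum, ← mul_sum, ih,
      geom_sum_succ]
    ring

/-- The variance of `X₀ + ⋯ + X_{n-1}` for the AR(1) process `X_{t+1} = ρ Xₜ + σ η_{t+1}`
with `Var X₀ = v₀`. -/
noncomputable def ar1SumVariance (v₀ ρ σ : ℝ) (n : ℕ) : ℝ :=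
  v₀ * (∑ i ∈ range n, ρ ^ i) ^ 2 + σ ^ 2 * ∑ k ∈ range n, (∑ i ∈ range k, ρ ^ i) ^ 2

theorem tendsto_ar1SumVariance_div {ρ : ℝ} (hρ : |ρ| < 1) (v₀ σ : ℝ) :
    Tendsto (fun n : ℕ ↦ ar1SumVariance v₀ ρ σ n / n) atTop (𝓝 (σ ^ 2 / (1 - ρ) ^ 2)) := by
  have hA : Tendsto (fun n ↦ (∑ i ∈ range n, ρ ^ i) ^ 2) atTop (𝓝 ((1 - ρ)⁻¹ ^ 2)) :=
    (hasSum_geometric_of_abs_lt_one hρ).tendsto_sum_nat.pow 2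
  have hinit : Tendsto (fun n : ℕ ↦ v₀ * (∑ i ∈ range n, ρ ^ i) ^ 2 / n) atTop (𝓝 0) :=
    (hA.const_mul v₀).div_atTop tendsto_natCast_atTop_atTop
  have hmean := hA.cesaro.const_mul (σ ^ 2)
  convert hinit.add hmean using 1
  · ext n
    rw [ar1SumVariance, add_div]
    ring
  · rw [zero_add, div_eq_mul_inv, inv_pow]

theorem log_div_eq_of_bansalYaron {X η ε C : ℕ → ℝ} {μc ρ σ σc : ℝ} (hCpos : ∀ t, 0 < C t)
    (hrecX : ∀ t, X (t + 1) = ρ * X t + σ * η (t + 1))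
    (hrecC : ∀ t, log (C (t + 1) / C t) = μc + X t + σc * ε (t + 1)) (n : ℕ) :
    log (C n / C 0) = n * μc + ((∑ i ∈ range n, ρ ^ i) * X 0
      + ∑ j ∈ range n, σ * ((∑ i ∈ range (n - 1 - j), ρ ^ i) * η (j + 1))
      + ∑ t ∈ range n, σc * ε (t + 1)) := by
  have htelescope : log (C n / C 0) = ∑ t ∈ range n, log (C (t + 1) / C t) := by
    simp only [log_div (hCpos _).ne' (hCpos _).ne', sum_range_sub (fun t ↦ log (C t))]
  rw [htelescope, sum_congr rfl fun t _ ↦ hrecC t,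
    sum_add_distrib, sum_add_distrib, sum_range_eq_of_succ_eq_mul_add hrecX]
  simp only [sum_const, card_range, nsmul_eq_mul, mul_left_comm _ σ]
  ring

theorem integral_rpow_div_eq_of_bansalYaron {Ω : Type*} [MeasurableSpace Ω] {μ : Measure Ω}
    {μc ρ σ σc : ℝ} {v₀ : ℝ≥0} {X η ε C : ℕ → Ω → ℝ} (hCpos : ∀ t ω, 0 < C t ω)
    (hindep : iIndepFun
      (fun k : Unit ⊕ ℕ ⊕ ℕ =>
        Sum.elim (fun _ => X 0) (Sum.elim (fun t => η (t + 1)) (fun t => ε (t + 1))) k) μ)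
    (hX0 : μ.map (X 0) = gaussianReal 0 v₀) (hη : ∀ t, μ.map (η (t + 1)) = gaussianReal 0 1)
    (hε : ∀ t, μ.map (ε (t + 1)) = gaussianReal 0 1)
    (hrecX : ∀ t ω, X (t + 1) ω = ρ * X t ω + σ * η (t + 1) ω)
    (hrecC : ∀ t ω, log (C (t + 1) ω / C t ω) = μc + X t ω + σc * ε (t + 1) ω) (θ : ℝ) (n : ℕ) :
    ∫ ω, (C n ω / C 0 ω) ^ θ ∂μ
      = exp (θ * n * μc + θ ^ 2 / 2 * (ar1SumVariance v₀ ρ σ n + n * σc ^ 2)) := by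
  set F : Unit ⊕ ℕ ⊕ ℕ → Ω → ℝ :=
    Sum.elim (fun _ => X 0) (Sum.elim (fun t => η (t + 1)) (fun t => ε (t + 1)))
  set coef : Unit ⊕ ℕ ⊕ ℕ → ℝ :=
    Sum.elim (fun _ ↦ ∑ i ∈ range n, ρ ^ i)
      (Sum.elim (fun j ↦ σ * ∑ i ∈ range (n - 1 - j), ρ ^ i) fun _ ↦ σc)
  set s : Finset (Unit ⊕ ℕ ⊕ ℕ) := univ.disjSum ((range n).disjSum (range n))
  have hlaw : ∀ k, μ.map (F k) = gaussianReal 0 (Sum.elim (fun _ ↦ v₀) (fun _ ↦ 1) k) := by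
    rintro (_ | j | t)
    exacts [hX0, hη j, hε t]
  have hlog (ω : Ω) : log (C n ω / C 0 ω) = n * μc + ∑ k ∈ s, coef k * F k ω := by
    rw [log_div_eq_of_bansalYaron (X := (X · ω)) (η := (η · ω)) (ε := (ε · ω)) (C := (C · ω))
      (hCpos · ω) (hrecX · ω) (hrecC · ω)]
    simp [s, coef, F, sum_disjSum, mul_assoc, add_assoc]
  have hmgf := mgf_sum_mul_of_iIndepFun_gaussianReal hindep hlaw coef s θ
  calc ∫ ω, (C n ω / C 0 ω) ^ θ ∂μ
      = ∫ ω, exp (θ * n * μc) * exp (θ * ∑ k ∈ s, coef k * F k ω) ∂μ := by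
        refine integral_congr_ae (ae_of_all _ fun ω ↦ ?_)
        dsimp only
        rw [rpow_def_of_pos (div_pos (hCpos n ω) (hCpos 0 ω)), hlog, ← exp_add]
        congr 1
        ring
    _ = exp (θ * n * μc) * mgf (fun ω ↦ ∑ k ∈ s, coef k * F k ω) μ θ := integral_const_mul _ _
    _ = _ := by
        rw [hmgf, ← exp_add, ar1SumVariance]
        simp only [s, coef, sum_disjSum, Sum.elim_inl, Sum.elim_inr,
          mul_zero, sum_const_zero, NNReal.coe_one, one_mul, mul_pow, ← mul_sum, sum_const,
          card_range, card_univ, Fintype.card_unit, Nat.cast_one, nsmul_eq_mul,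
          sum_range_reflect (fun k ↦ (∑ i ∈ range k, ρ ^ i) ^ 2) n]
        congr 1
        ring

theorem stmt_10_general {Ω : Type*} [MeasurableSpace Ω] (μ : Measure Ω)
    (μc ρ σ σc γ : ℝ) (hρ : |ρ| < 1) (hγ : γ ≠ 1)
    (X η ε : ℕ → Ω → ℝ) (C : ℕ → Ω → ℝ)
    (hCpos : ∀ t ω, 0 < C t ω)
    -- joint independence of X₀, the η's and the ε's
    (hindep : iIndepFun
      (fun k : Unit ⊕ ℕ ⊕ ℕ =>
        Sum.elim (fun _ => X 0) (Sum.elim (fun t => η (t + 1)) (fun t => ε (t + 1))) k) μ)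
    -- laws
    (hX0 : Measure.map (X 0) μ = gaussianReal 0 (Real.toNNReal (σ ^ 2 / (1 - ρ ^ 2))))
    (hη : ∀ t, Measure.map (η (t + 1)) μ = gaussianReal 0 1)
    (hε : ∀ t, Measure.map (ε (t + 1)) μ = gaussianReal 0 1)
    -- dynamics
    (hrecX : ∀ t ω, X (t + 1) ω = ρ * X t ω + σ * η (t + 1) ω)
    (hrecC : ∀ t ω, Real.log (C (t + 1) ω / C t ω) = μc + X t ω + σc * ε (t + 1) ω) :
    Tendsto
      (fun n : ℕ =>
        (∫ ω, (C n ω / C 0 ω) ^ (1 - γ) ∂μ) ^ (1 / ((1 - γ) * n)))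
      atTop
      (nhds (Real.exp (μc + (1 / 2) * (1 - γ) * (σc ^ 2 + σ ^ 2 / (1 - ρ) ^ 2)))) := by
  set v₀ : ℝ := (σ ^ 2 / (1 - ρ ^ 2)).toNNReal
  have hθ : 1 - γ ≠ 0 := sub_ne_zero.2 hγ.symm
  have hrate : Tendsto (fun n : ℕ ↦ μc + (1 - γ) / 2 * (ar1SumVariance v₀ ρ σ n / n + σc ^ 2))
      atTop (𝓝 (μc + 1 / 2 * (1 - γ) * (σc ^ 2 + σ ^ 2 / (1 - ρ) ^ 2))) := by
    convert (((tendsto_ar1SumVariance_div hρ v₀ σ).add_const (σc ^ 2)).const_mul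
      ((1 - γ) / 2)).const_add μc using 2
    ring
  refine ((continuous_exp.tendsto _).comp hrate).congr' ?_
  filter_upwards [eventually_ne_atTop 0] with n hn
  rw [Function.comp_apply,
    integral_rpow_div_eq_of_bansalYaron hCpos hindep hX0 hη hε hrecX hrecC, ← exp_mul]
  congr 1
  field_simp
  ring

/-- Bansal–Yaron model: with `ln(C_{t+1}/C_t) = μ_c + Xₜ + σ_c ε_{t+1}` and a stationary
Gaussian AR(1) state `X_{t+1} = ρ Xₜ + σ η_{t+1}`, the risk-adjusted long-run mean
consumption growth rate equals `exp(μ_c + (1/2)(1-γ)(σ_c² + σ²/(1-ρ)²))`. -/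
theorem stmt_10 {Ω : Type*} [MeasurableSpace Ω] (μ : Measure Ω) [IsProbabilityMeasure μ]
    (μc ρ σ σc γ : ℝ) (hρ : |ρ| < 1) (hσ : 0 < σ) (hσc : 0 < σc) (hγ : γ ≠ 1)
    (X η ε : ℕ → Ω → ℝ) (C : ℕ → Ω → ℝ)
    (hXmeas : ∀ t, Measurable (X t)) (hηmeas : ∀ t, Measurable (η t))
    (hεmeas : ∀ t, Measurable (ε t)) (hCmeas : ∀ t, Measurable (C t))
    (hCpos : ∀ t ω, 0 < C t ω)
    -- joint independence of X₀, the η's and the ε's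
    (hindep : iIndepFun
      (fun k : Unit ⊕ ℕ ⊕ ℕ =>
        Sum.elim (fun _ => X 0) (Sum.elim (fun t => η (t + 1)) (fun t => ε (t + 1))) k) μ)
    -- laws
    (hX0 : Measure.map (X 0) μ = gaussianReal 0 (Real.toNNReal (σ ^ 2 / (1 - ρ ^ 2))))
    (hη : ∀ t, Measure.map (η (t + 1)) μ = gaussianReal 0 1)
    (hε : ∀ t, Measure.map (ε (t + 1)) μ = gaussianReal 0 1)
    -- dynamics
    (hrecX : ∀ t ω, X (t + 1) ω = ρ * X t ω + σ * η (t + 1) ω)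
    (hrecC : ∀ t ω, Real.log (C (t + 1) ω / C t ω) = μc + X t ω + σc * ε (t + 1) ω) :
    Tendsto
      (fun n : ℕ =>
        (∫ ω, (C n ω / C 0 ω) ^ (1 - γ) ∂μ) ^ (1 / ((1 - γ) * n)))
      atTop
      (nhds (Real.exp (μc + (1 / 2) * (1 - γ) * (σc ^ 2 + σ ^ 2 / (1 - ρ) ^ 2)))) :=
  stmt_10_general μ μc ρ σ σc γ hρ hγ X η ε C hCpos hindep hX0 hη hε hrecX hrecC
end

section
/- Let K be an n × n nonnegative irreducible matrix with spectral radius r(K) > 0, Perron eigenvector e ≫ 0 (Ke = r(K)e), left Perron eigenvector e* ≫ 0 (Kᵀe* = r(K)e*), and let β ∈ (0,1), θ > 0. Suppose g ∈ ℝⁿ is nonzero, nonnegative, and satisfies g(x) = (1 - β + β (Kg(x))^{1/θ})^θ for all x. Then β^θ r(K) < 1. -/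
/-!
Since `1 - β > 0`, raising `β t^{1/θ} < 1 - β + β t^{1/θ}` to the power `θ` gives
`β^θ t < φ(t)`, so the fixed point satisfies `β^θ (Kg)_i < g_i` for every `i`. Pairing with the
positive left eigenvector `e*` turns this into `β^θ r ⟪e*, g⟫ < ⟪e*, g⟫`, and `⟪e*, g⟫ ≥ 0`
forces `β^θ r < 1`.
-/

open Real Matrix

theorem rpow_mul_lt_one_sub_add_mul_rpow_one_div {β θ t : ℝ} (hβ0 : 0 ≤ β) (hβ1 : β < 1)
    (hθ : 0 < θ) (ht : 0 ≤ t) : β ^ θ * t < (1 - β + β * t ^ (1 / θ)) ^ θ := by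
  have hroot : 0 ≤ t ^ (1 / θ) := rpow_nonneg ht _
  calc β ^ θ * t = (β * t ^ (1 / θ)) ^ θ := by
        rw [mul_rpow hβ0 hroot, one_div, rpow_inv_rpow ht hθ.ne']
    _ < (1 - β + β * t ^ (1 / θ)) ^ θ :=
        rpow_lt_rpow (mul_nonneg hβ0 hroot) (by linarith) hθ

theorem mul_lt_one_of_mul_mulVec_lt {ι : Type*} [Fintype ι] [Nonempty ι] {K : Matrix ι ι ℝ}
    {r c : ℝ} {w v : ι → ℝ} (hw : ∀ i, 0 < w i) (hKw : Kᵀ *ᵥ w = r • w) (hv : 0 ≤ v)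
    (hlt : ∀ i, c * (K *ᵥ v) i < v i) : c * r < 1 := by
  have hdual : w ⬝ᵥ (K *ᵥ v) = r * (w ⬝ᵥ v) := by
    rw [dotProduct_mulVec, ← mulVec_transpose, hKw, smul_dotProduct, smul_eq_mul]
  have hpair : c * r * (w ⬝ᵥ v) < w ⬝ᵥ v :=
    calc c * r * (w ⬝ᵥ v) = ∑ i, w i * (c * (K *ᵥ v) i) := by
          rw [mul_assoc, ← hdual, dotProduct, Finset.mul_sum]
          exact Finset.sum_congr rfl fun i _ => by ring
      _ < ∑ i, w i * v i := Finset.sum_lt_sum_of_nonempty Finset.univ_nonempty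
          fun i _ => mul_lt_mul_of_pos_left (hlt i) (hw i)
  have hpair_nonneg : 0 ≤ w ⬝ᵥ v := dotProduct_nonneg_of_nonneg (fun i => (hw i).le) hv
  by_contra! hcr
  nlinarith

theorem stmt_19_general (n : ℕ) (K : Matrix (Fin n) (Fin n) ℝ)
    (hKnonneg : ∀ i j, 0 ≤ K i j)
    (r : ℝ)
    (estar : Fin n → ℝ) (hestar : ∀ i, 0 < estar i)
    (hKestar : K.transpose.mulVec estar = r • estar)
    (β θ : ℝ) (hβ0 : 0 < β) (hβ1 : β < 1) (hθ : 0 < θ)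
    (g : Fin n → ℝ) (hgnonneg : ∀ i, 0 ≤ g i) (hgne : g ≠ 0)
    (hfix : ∀ i, g i = (1 - β + β * (K.mulVec g i) ^ (1 / θ)) ^ θ) :
    β ^ θ * r < 1 := by
  obtain ⟨i₀, -⟩ := Function.ne_iff.mp hgne
  have : Nonempty (Fin n) := ⟨i₀⟩
  have hKg : ∀ i, 0 ≤ K.mulVec g i := fun i => dotProduct_nonneg_of_nonneg (hKnonneg i) hgnonneg
  refine mul_lt_one_of_mul_mulVec_lt hestar hKestar hgnonneg fun i => ?_
  exact (rpow_mul_lt_one_sub_add_mul_rpow_one_div hβ0.le hβ1 hθ (hKg i)).trans_eq (hfix i).symm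

/-- If `K` is a nonnegative irreducible matrix with `r(K) > 0`, right and left Perron
eigenvectors `e, e* ≫ 0`, and a nonzero nonnegative `g` satisfies the fixed point
equation `g = (1 - β + β (Kg)^{1/θ})^θ` with `β ∈ (0,1)`, `θ > 0`, then `β^θ r(K) < 1`. -/
theorem stmt_19 (n : ℕ) (K : Matrix (Fin n) (Fin n) ℝ)
    (hKnonneg : ∀ i j, 0 ≤ K i j)
    (hirr : ∀ S : Finset (Fin n), S.Nonempty → S ≠ Finset.univ →
      ∃ i ∈ S, ∃ j ∉ S, 0 < K i j)
    (r : ℝ) (hr : 0 < r)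
    (e : Fin n → ℝ) (he : ∀ i, 0 < e i) (hKe : K.mulVec e = r • e)
    (estar : Fin n → ℝ) (hestar : ∀ i, 0 < estar i)
    (hKestar : K.transpose.mulVec estar = r • estar)
    (β θ : ℝ) (hβ0 : 0 < β) (hβ1 : β < 1) (hθ : 0 < θ)
    (g : Fin n → ℝ) (hgnonneg : ∀ i, 0 ≤ g i) (hgne : g ≠ 0)
    (hfix : ∀ i, g i = (1 - β + β * (K.mulVec g i) ^ (1 / θ)) ^ θ) :
    β ^ θ * r < 1 :=
  stmt_19_general n K hKnonneg r estar hestar hKestar β θ hβ0 hβ1 hθ g hgnonneg hgne hfix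
end
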